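/- Testing-unions aggregation bound: suppose detectors φ_{ij} (1 ≤ i ≤ m, 1 ≤ j ≤ n) satisfy ∫ e^{−φ_{ij}} p dP ≤ ε_{ij} for all p ∈ X_i and ∫ e^{φ_{ij}} q dP ≤ ε_{ij} for all q ∈ Y_j, with all ε_{ij} > 0. Let E = [ε_{ij}], let g > 0, h > 0 satisfy Eh = ‖E‖₂,₂ g and Eᵀg = ‖E‖₂,₂ h, set a_{ij} = ln(h_j/g_i), and define φ(ω) = max_i min_j [φ_{ij}(ω) − a_{ij}]. Then ∫ e^{−φ} p dP ≤ ‖E‖₂,₂ for every p ∈ ∪_i X_i, and ∫ e^{φ} q dP ≤ ‖E‖₂,₂ for every q ∈ ∪_j Y_j. -/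
import Mathlib


open MeasureTheory Matrix

/-- Spectral norm of a rectangular real matrix. -/
noncomputable def specNorm {m n : ℕ} (E : Matrix (Fin m) (Fin n) ℝ) : ℝ :=
  ‖LinearMap.toContinuousLinearMap (Matrix.toEuclideanLin E)‖

/-- Testing unions: given detectors φ_{ij} with risks ε_{ij} for the pairs (X_i,Y_j),
and positive Perron vectors g,h of E = [ε_{ij}] (Eh = ‖E‖g, Eᵀg = ‖E‖h), the
aggregated detector φ(ω) = max_i min_j [φ_{ij}(ω) - ln(h_j/g_i)] has risk ‖E‖₂,₂ on
the unions ∪_i X_i and ∪_j Y_j. -/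
theorem testing_unions_aggregated_detector
    {Ω : Type*} [MeasurableSpace Ω] (P : Measure Ω)
    {m n : ℕ} [NeZero m] [NeZero n]
    (X : Fin m → Set (Ω → ℝ)) (Y : Fin n → Set (Ω → ℝ))
    (φ : Fin m → Fin n → Ω → ℝ) (hφ : ∀ i j, Measurable (φ i j))
    (ε : Matrix (Fin m) (Fin n) ℝ) (hε : ∀ i j, 0 < ε i j)
    (hXd : ∀ i, ∀ p ∈ X i, (∀ ω, 0 ≤ p ω) ∧ Measurable p)
    (hYd : ∀ j, ∀ q ∈ Y j, (∀ ω, 0 ≤ q ω) ∧ Measurable q)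
    (hXint : ∀ i j, ∀ p ∈ X i, Integrable (fun ω => Real.exp (-(φ i j ω)) * p ω) P)
    (hYint : ∀ i j, ∀ q ∈ Y j, Integrable (fun ω => Real.exp (φ i j ω) * q ω) P)
    (hX : ∀ i j, ∀ p ∈ X i, ∫ ω, Real.exp (-(φ i j ω)) * p ω ∂P ≤ ε i j)
    (hY : ∀ i j, ∀ q ∈ Y j, ∫ ω, Real.exp (φ i j ω) * q ω ∂P ≤ ε i j)
    (g : Fin m → ℝ) (h : Fin n → ℝ) (hg : ∀ i, 0 < g i) (hh : ∀ j, 0 < h j)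
    (hgh1 : ε *ᵥ h = specNorm ε • g) (hgh2 : εᵀ *ᵥ g = specNorm ε • h) :
    (∀ p, (∃ i, p ∈ X i) →
      ∫ ω, Real.exp (-(Finset.univ.sup' Finset.univ_nonempty fun i =>
          Finset.univ.inf' Finset.univ_nonempty fun j =>
            φ i j ω - Real.log (h j / g i))) * p ω ∂P ≤ specNorm ε) ∧
    (∀ q, (∃ j, q ∈ Y j) →
      ∫ ω, Real.exp (Finset.univ.sup' Finset.univ_nonempty fun i =>
          Finset.univ.inf' Finset.univ_nonempty fun j =>
            φ i j ω - Real.log (h j / g i)) * q ω ∂P ≤ specNorm ε) := by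
  set N := specNorm ε with hN
  constructor
  · rintro p ⟨i, hpi⟩
    obtain ⟨hp0, hpm⟩ := hXd i p hpi
    have key : ∀ ω, Real.exp (-(Finset.univ.sup' Finset.univ_nonempty fun i =>
          Finset.univ.inf' Finset.univ_nonempty fun j =>
            φ i j ω - Real.log (h j / g i))) * p ω
        ≤ ∑ j, (h j / g i) * (Real.exp (-(φ i j ω)) * p ω) := by
      intro ω
      obtain ⟨j0, _, hj0⟩ := Finset.exists_mem_eq_inf' (Finset.univ_nonempty)
        (fun j => φ i j ω - Real.log (h j / g i))
      have h1 : φ i j0 ω - Real.log (h j0 / g i)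
          ≤ Finset.univ.sup' Finset.univ_nonempty fun i =>
            Finset.univ.inf' Finset.univ_nonempty fun j =>
              φ i j ω - Real.log (h j / g i) := by
        calc φ i j0 ω - Real.log (h j0 / g i)
            = Finset.univ.inf' Finset.univ_nonempty fun j =>
                φ i j ω - Real.log (h j / g i) := hj0.symm
          _ ≤ _ := Finset.le_sup' (f := fun i => Finset.univ.inf' Finset.univ_nonempty
              fun j => φ i j ω - Real.log (h j / g i)) (Finset.mem_univ i)
      have h2 : Real.exp (-(Finset.univ.sup' Finset.univ_nonempty fun i =>
          Finset.univ.inf' Finset.univ_nonempty fun j =>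
            φ i j ω - Real.log (h j / g i)))
          ≤ (h j0 / g i) * Real.exp (-(φ i j0 ω)) := by
        rw [show (h j0 / g i) * Real.exp (-(φ i j0 ω))
            = Real.exp (-(φ i j0 ω - Real.log (h j0 / g i))) by
          rw [neg_sub, Real.exp_sub, Real.exp_log (div_pos (hh j0) (hg i)), Real.exp_neg,
            div_eq_mul_inv]; ring]
        exact Real.exp_le_exp.2 (neg_le_neg h1)
      calc _ ≤ ((h j0 / g i) * Real.exp (-(φ i j0 ω))) * p ω :=
            mul_le_mul_of_nonneg_right h2 (hp0 ω)
        _ = (h j0 / g i) * (Real.exp (-(φ i j0 ω)) * p ω) := by ring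
        _ ≤ _ := Finset.single_le_sum (f := fun j => (h j / g i) * (Real.exp (-(φ i j ω)) * p ω))
            (fun j _ => mul_nonneg (div_pos (hh j) (hg i)).le
              (mul_nonneg (Real.exp_pos _).le (hp0 ω))) (Finset.mem_univ j0)
    have hI : Integrable (fun ω => ∑ j, (h j / g i) * (Real.exp (-(φ i j ω)) * p ω)) P :=
      integrable_finset_sum _ fun j _ => (hXint i j p hpi).const_mul _
    have hv := congrFun hgh1 i
    simp only [Matrix.mulVec, dotProduct, Pi.smul_apply, smul_eq_mul] at hv
    calc ∫ ω, Real.exp (-(Finset.univ.sup' Finset.univ_nonempty fun i =>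
            Finset.univ.inf' Finset.univ_nonempty fun j =>
              φ i j ω - Real.log (h j / g i))) * p ω ∂P
        ≤ ∫ ω, ∑ j, (h j / g i) * (Real.exp (-(φ i j ω)) * p ω) ∂P :=
          integral_mono_of_nonneg
            (Filter.Eventually.of_forall fun ω => mul_nonneg (Real.exp_pos _).le (hp0 ω))
            hI (Filter.Eventually.of_forall key)
      _ = ∑ j, (h j / g i) * ∫ ω, Real.exp (-(φ i j ω)) * p ω ∂P := by
          rw [integral_finset_sum _ fun j _ => (hXint i j p hpi).const_mul _]
          exact Finset.sum_congr rfl fun j _ => integral_const_mul _ _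
      _ ≤ ∑ j, (h j / g i) * ε i j :=
          Finset.sum_le_sum fun j _ => mul_le_mul_of_nonneg_left (hX i j p hpi)
            (div_pos (hh j) (hg i)).le
      _ = (∑ j, ε i j * h j) / g i := by
          rw [Finset.sum_div]; exact Finset.sum_congr rfl fun j _ => by ring
      _ = N := by rw [hv, mul_div_assoc, div_self (hg i).ne', mul_one]
  · rintro q ⟨j, hqj⟩
    obtain ⟨hq0, hqm⟩ := hYd j q hqj
    have key : ∀ ω, Real.exp (Finset.univ.sup' Finset.univ_nonempty fun i =>
          Finset.univ.inf' Finset.univ_nonempty fun j =>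
            φ i j ω - Real.log (h j / g i)) * q ω
        ≤ ∑ i, (g i / h j) * (Real.exp (φ i j ω) * q ω) := by
      intro ω
      obtain ⟨i0, _, hi0⟩ := Finset.exists_mem_eq_sup' (Finset.univ_nonempty)
        (fun i => Finset.univ.inf' Finset.univ_nonempty fun j =>
          φ i j ω - Real.log (h j / g i))
      have h1 : (Finset.univ.sup' Finset.univ_nonempty fun i =>
          Finset.univ.inf' Finset.univ_nonempty fun j =>
            φ i j ω - Real.log (h j / g i)) ≤ φ i0 j ω - Real.log (h j / g i0) := by
        rw [hi0]; exact Finset.inf'_le _ (Finset.mem_univ j)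
      have h2 : Real.exp (Finset.univ.sup' Finset.univ_nonempty fun i =>
          Finset.univ.inf' Finset.univ_nonempty fun j =>
            φ i j ω - Real.log (h j / g i))
          ≤ (g i0 / h j) * Real.exp (φ i0 j ω) := by
        rw [show (g i0 / h j) * Real.exp (φ i0 j ω)
            = Real.exp (φ i0 j ω - Real.log (h j / g i0)) by
          rw [Real.exp_sub, Real.exp_log (div_pos (hh j) (hg i0)), div_div_eq_mul_div]; ring]
        exact Real.exp_le_exp.2 h1
      calc _ ≤ ((g i0 / h j) * Real.exp (φ i0 j ω)) * q ω :=
            mul_le_mul_of_nonneg_right h2 (hq0 ω)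
        _ = (g i0 / h j) * (Real.exp (φ i0 j ω) * q ω) := by ring
        _ ≤ _ := Finset.single_le_sum (f := fun i => (g i / h j) * (Real.exp (φ i j ω) * q ω))
            (fun i _ => mul_nonneg (div_pos (hg i) (hh j)).le
              (mul_nonneg (Real.exp_pos _).le (hq0 ω))) (Finset.mem_univ i0)
    have hI : Integrable (fun ω => ∑ i, (g i / h j) * (Real.exp (φ i j ω) * q ω)) P :=
      integrable_finset_sum _ fun i _ => (hYint i j q hqj).const_mul _
    have hv := congrFun hgh2 j
    simp only [Matrix.mulVec, dotProduct, Matrix.transpose_apply, Pi.smul_apply,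
      smul_eq_mul] at hv
    calc ∫ ω, Real.exp (Finset.univ.sup' Finset.univ_nonempty fun i =>
            Finset.univ.inf' Finset.univ_nonempty fun j =>
              φ i j ω - Real.log (h j / g i)) * q ω ∂P
        ≤ ∫ ω, ∑ i, (g i / h j) * (Real.exp (φ i j ω) * q ω) ∂P :=
          integral_mono_of_nonneg
            (Filter.Eventually.of_forall fun ω => mul_nonneg (Real.exp_pos _).le (hq0 ω))
            hI (Filter.Eventually.of_forall key)
      _ = ∑ i, (g i / h j) * ∫ ω, Real.exp (φ i j ω) * q ω ∂P := by
          rw [integral_finset_sum _ fun i _ => (hYint i j q hqj).const_mul _]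
          exact Finset.sum_congr rfl fun i _ => integral_const_mul _ _
      _ ≤ ∑ i, (g i / h j) * ε i j :=
          Finset.sum_le_sum fun i _ => mul_le_mul_of_nonneg_left (hY i j q hqj)
            (div_pos (hg i) (hh j)).le
      _ = (∑ i, ε i j * g i) / h j := by
          rw [Finset.sum_div]; exact Finset.sum_congr rfl fun i _ => by ring
      _ = N := by rw [hv, mul_div_assoc, div_self (hh j).ne', mul_one]
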